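/- Let X be the Petty space, i.e. ℝ³ with the norm ‖(x,y,z)‖ = √(x² + y²) + |z|. Then H_α(X) = H'_α(X) = 2³ = 8: the 8 points ±A, ±B, ±C, ±D with A = (−0.18, 0, 0.82), B = (0.82, 0, −0.18), C = (0.32, 0.6, 0.32), D = (0.32, −0.6, 0.32) lie on the unit sphere of X and form a bounded and separated antipodal set with some constant d > 1, and 8 is the largest possible cardinality of such a set. -/

import Mathlib

/-!
The upper bound is the Danzer–Grünbaum volume argument. If `S` is antipodal with convex hull
`K`, the half-size copies `x + (K - x) / 2`, `x ∈ S`, lie in `K`, and the copies centred at two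
points `x ≠ y` can only meet on the hyperplane halfway between the parallel supporting
hyperplanes through `x` and `y`; hence `|S| · 2⁻ⁿ · vol K ≤ vol K`. A set that is not
full-dimensional is first moved into its own affine span.

For the lower bound, the functionals `(1, 0, 1)`, `(-0.51, 0.85, 0.51)` and `(-0.51, -0.85, 0.51)`
have dual norm at most `1`, are linearly independent, and take only the values `±0.64`, `±0.51`
and `±0.51` on the eight points. Two distinct points therefore differ at one of them, which
separates them with gap at least `1.02`.
-/

open Metric

noncomputable section

/-- `S` is a bounded and separated antipodal subset of `X` with constant `d`. -/
def IsBSA {X : Type*} [NormedAddCommGroup X] [NormedSpace ℝ X] (S : Set X) (d : ℝ) : Prop :=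
  S ⊆ closedBall (0 : X) 1 ∧
    ∀ x ∈ S, ∀ y ∈ S, x ≠ y → ∃ f : X →L[ℝ] ℝ, ‖f‖ ≤ 1 ∧
      d ≤ f x - f y ∧ ∀ z ∈ S, f y ≤ f z ∧ f z ≤ f x

/-- The antipodality condition (with gap `1`). -/
def AntipProp {X : Type*} [NormedAddCommGroup X] [NormedSpace ℝ X] (S : Set X) : Prop :=
  ∀ x ∈ S, ∀ y ∈ S, x ≠ y → ∃ f : X →L[ℝ] ℝ, ‖f‖ ≤ 1 ∧
    1 ≤ f x - f y ∧ ∀ z ∈ S, f y ≤ f z ∧ f z ≤ f x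

/-- The strict antipodality condition (with gap `> 1`). -/
def StrictAntipProp {X : Type*} [NormedAddCommGroup X] [NormedSpace ℝ X] (S : Set X) : Prop :=
  ∀ x ∈ S, ∀ y ∈ S, x ≠ y → ∃ f : X →L[ℝ] ℝ, ‖f‖ ≤ 1 ∧
    1 < f x - f y ∧ ∀ z ∈ S, f y ≤ f z ∧ f z ≤ f x

/-- The antipodal Hadwiger number `H_α(X)`. -/
def Halpha (X : Type*) [NormedAddCommGroup X] [NormedSpace ℝ X] : ℕ :=
  sSup {k : ℕ | ∃ S : Finset X, S.card = k ∧ (S : Set X) ⊆ sphere (0 : X) 1 ∧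
    AntipProp (S : Set X)}

/-- The strict antipodal Hadwiger number `H'_α(X)`. -/
def strictHalpha (X : Type*) [NormedAddCommGroup X] [NormedSpace ℝ X] : ℕ :=
  sSup {k : ℕ | ∃ S : Finset X, S.card = k ∧ (S : Set X) ⊆ sphere (0 : X) 1 ∧
    StrictAntipProp (S : Set X)}

open MeasureTheory Module Set

section Antipodal

variable {V : Type*} [AddCommGroup V] [Module ℝ V]

def IsAntipodal (S : Set V) : Prop :=
  ∀ x ∈ S, ∀ y ∈ S, x ≠ y →
    ∃ f : V →ₗ[ℝ] ℝ, f y < f x ∧ ∀ z ∈ S, f y ≤ f z ∧ f z ≤ f x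

theorem IsAntipodal.of_injOn_image_eq {S : Set V} (h : IsAntipodal S) {W : Type*}
    [AddCommGroup W] [Module ℝ W] {σ : W →ᵃ[ℝ] V} {T : Set W} (hσ : InjOn σ T)
    (hTS : σ '' T = S) : IsAntipodal T := by
  subst hTS
  intro x hx y hy hxy
  obtain ⟨f, hlt, hslab⟩ :=
    h _ (mem_image_of_mem σ hx) _ (mem_image_of_mem σ hy) (hσ.ne hx hy hxy)
  have hfσ : ∀ w, (f ∘ₗ σ.linear) w = f (σ w) - f (σ 0) := fun w => by
    rw [congrFun σ.decomp w, Pi.add_apply, map_add, LinearMap.comp_apply, add_sub_cancel_right]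
  refine ⟨f ∘ₗ σ.linear, ?_, fun z hz => ?_⟩
  · rw [hfσ, hfσ]; linarith
  · have := hslab _ (mem_image_of_mem σ hz)
    rw [hfσ, hfσ, hfσ]; constructor <;> linarith [this.1, this.2]

theorem Convex.image_homothety_subset {K : Set V} (hK : Convex ℝ K) {x : V} (hx : x ∈ K)
    {r : ℝ} (hr : r ∈ Icc 0 1) : AffineMap.homothety x r '' K ⊆ K := by
  rintro _ ⟨k, hk, rfl⟩
  rw [AffineMap.homothety_eq_lineMap]
  exact hK.lineMap_mem hx hk hr

end Antipodal

section Volume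

variable {E : Type*} [NormedAddCommGroup E] [NormedSpace ℝ E] [MeasurableSpace E] [BorelSpace E]
  [FiniteDimensional ℝ E] (μ : Measure E) [μ.IsAddHaarMeasure]

theorem addHaar_setOf_apply_eq {f : E →ₗ[ℝ] ℝ} (hf : f ≠ 0) (c : ℝ) :
    μ {w | f w = c} = 0 := by
  have hcoe : {w | f w = c} = ((affineSpan ℝ {c}).comap f.toAffineMap : Set E) := by
    ext w
    simp [AffineSubspace.coe_comap, AffineSubspace.coe_affineSpan_singleton]
  rw [hcoe]
  refine Measure.addHaar_affineSubspace μ _ fun htop => hf ?_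
  have hc : ∀ w, f w = c := fun w => by
    have : w ∈ ((affineSpan ℝ {c}).comap f.toAffineMap : Set E) := by rw [htop]; trivial
    rwa [← hcoe] at this
  ext w
  simpa using (hc w).trans (hc 0).symm

theorem IsAntipodal.aedisjoint_image_homothety {S : Set E} (hS : IsAntipodal S) {x y : E}
    (hx : x ∈ S) (hy : y ∈ S) (hxy : x ≠ y) :
    AEDisjoint μ (AffineMap.homothety x (1 / 2 : ℝ) '' convexHull ℝ S)
      (AffineMap.homothety y (1 / 2 : ℝ) '' convexHull ℝ S) := by
  obtain ⟨f, hlt, hslab⟩ := hS x hx y hy hxy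
  have hK : ∀ k ∈ convexHull ℝ S, f y ≤ f k ∧ f k ≤ f x := fun k hk =>
    convexHull_min (fun z hz => hslab z hz)
      ((convex_halfSpace_ge f.isLinear _).inter (convex_halfSpace_le f.isLinear _)) hk
  have hf : ∀ p k, f (AffineMap.homothety p (1 / 2 : ℝ) k) = (f p + f k) / 2 := fun p k => by
    rw [AffineMap.homothety_apply, vsub_eq_sub, vadd_eq_add, map_add, map_smul, map_sub,
      smul_eq_mul]
    ring
  -- the two copies can only meet where `f` is halfway between `f y` and `f x`
  refine measure_mono_null (t := {w | f w = (f x + f y) / 2}) ?_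
    (addHaar_setOf_apply_eq μ ?_ _)
  · rintro _ ⟨⟨k, hk, rfl⟩, ⟨k', hk', hkk'⟩⟩
    have h₁ := hK k hk
    have h₂ := hK k' hk'
    have h₃ := congrArg f hkk'
    rw [hf, hf] at h₃
    show f _ = _
    rw [hf]
    linarith
  · rintro rfl
    exact lt_irrefl _ hlt

end Volume

theorem IsAntipodal.card_le_of_affineSpan_eq_top {E : Type*} [NormedAddCommGroup E]
    [NormedSpace ℝ E] [FiniteDimensional ℝ E] {S : Finset E} (hS : IsAntipodal (S : Set E))
    (hspan : affineSpan ℝ (S : Set E) = ⊤) : S.card ≤ 2 ^ finrank ℝ E := by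
  borelize E
  let μ : Measure E := Measure.addHaar
  set K := convexHull ℝ (S : Set E)
  set T := fun x => AffineMap.homothety x (1 / 2 : ℝ) '' K
  have hKcompact : IsCompact K := S.finite_toSet.isCompact_convexHull ℝ
  have hKpos : μ K ≠ 0 := by
    have hint : (interior K).Nonempty := by
      rw [(convex_convexHull ℝ _).interior_nonempty_iff_affineSpan_eq_top, affineSpan_convexHull,
        hspan]
    exact fun h => (isOpen_interior.measure_pos μ hint).ne' (measure_mono_null interior_subset h)
  have hT : ∀ x, μ (T x) = (2 ^ finrank ℝ E)⁻¹ * μ K := fun x => by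
    simp [T, Measure.addHaar_image_homothety, ENNReal.ofReal_pow, ENNReal.ofReal_inv_of_pos]
  have hmeas : ∀ x ∈ S, NullMeasurableSet (T x) μ := fun x _ =>
    (hKcompact.image (AffineMap.homothety_continuous x _)).isClosed.measurableSet
      |>.nullMeasurableSet
  have hsum : ∑ x ∈ S, μ (T x) ≤ μ K := by
    rw [← measure_biUnion_finset₀ (fun x hx y hy hxy => hS.aedisjoint_image_homothety μ hx hy hxy)
      hmeas]
    exact measure_mono <| iUnion₂_subset fun x hx =>
      (convex_convexHull ℝ _).image_homothety_subset (subset_convexHull ℝ _ hx)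
        ⟨by norm_num, by norm_num⟩
  rw [Finset.sum_congr rfl fun x _ => hT x, Finset.sum_const, nsmul_eq_mul, ← mul_assoc] at hsum
  have hle : (S.card : ENNReal) * (2 ^ finrank ℝ E)⁻¹ ≤ 1 :=
    (ENNReal.mul_le_mul_iff_left hKpos hKcompact.measure_lt_top.ne).1 (by rwa [one_mul])
  rw [ENNReal.mul_inv_le_iff (by simp) (by simp), one_mul] at hle
  exact_mod_cast hle

theorem IsAntipodal.card_le_two_pow_finrank {V : Type*} [AddCommGroup V] [Module ℝ V]
    [FiniteDimensional ℝ V] {S : Finset V} (hS : IsAntipodal (S : Set V)) :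
    S.card ≤ 2 ^ finrank ℝ V := by
  classical
  obtain rfl | ⟨x₀, hx₀⟩ := S.eq_empty_or_nonempty
  · simp
  -- identify the affine span `x₀ + W` of `S` with a Euclidean space of dimension `finrank W`
  set W := vectorSpan ℝ (S : Set V)
  obtain ⟨n, hn⟩ : ∃ n, finrank ℝ W = n := ⟨_, rfl⟩
  let e := LinearEquiv.ofFinrankEq (EuclideanSpace ℝ (Fin n)) W
    (by rw [finrank_euclideanSpace_fin, hn])
  let σ : EuclideanSpace ℝ (Fin n) →ᵃ[ℝ] V :=
    (W.subtype ∘ₗ e.toLinearMap).toAffineMap + AffineMap.const ℝ _ x₀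
  have hσ : ∀ u, σ u = e u + x₀ := fun u => rfl
  have hσinj : Function.Injective σ := fun u v huv => by
    simpa [hσ] using huv
  have hSσ : (S : Set V) ⊆ range σ := fun v hv =>
    ⟨e.symm ⟨v - x₀, vsub_mem_vectorSpan ℝ hv hx₀⟩, by simp [hσ]⟩
  set T := S.preimage σ hσinj.injOn
  have hTS : σ '' (T : Set (EuclideanSpace ℝ (Fin n))) = S := by
    rw [Finset.coe_preimage, image_preimage_eq_of_subset hSσ]
  have hcard : T.card = S.card := by
    rw [← Finset.card_image_of_injective T hσinj]
    exact congrArg Finset.card (Finset.coe_injective (by rw [Finset.coe_image, hTS]))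
  have hspan : affineSpan ℝ (T : Set (EuclideanSpace ℝ (Fin n))) = ⊤ := by
    obtain ⟨u, hu⟩ := hSσ hx₀
    have hT : T.Nonempty := ⟨u, by rw [Finset.mem_preimage, hu]; exact hx₀⟩
    rw [AffineSubspace.affineSpan_eq_top_iff_vectorSpan_eq_top_of_nonempty ℝ _ _
      (Finset.coe_nonempty.2 hT)]
    apply Submodule.map_injective_of_injective (σ.linear_injective_iff.2 hσinj)
    have hlin : σ.linear = W.subtype ∘ₗ e.toLinearMap := by ext u; simp [σ]
    rw [AffineMap.map_vectorSpan, hTS, Submodule.map_top, hlin, LinearMap.range_comp,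
      LinearEquiv.range, Submodule.map_top, Submodule.range_subtype]
  calc S.card = T.card := hcard.symm
    _ ≤ 2 ^ n := by
      simpa using (hS.of_injOn_image_eq hσinj.injOn hTS).card_le_of_affineSpan_eq_top hspan
    _ ≤ 2 ^ finrank ℝ V := Nat.pow_le_pow_right two_pos (hn ▸ Submodule.finrank_le W)

section Hadwiger

variable {X : Type*} [NormedAddCommGroup X] [NormedSpace ℝ X]

theorem AntipProp.isAntipodal {S : Set X} (h : AntipProp S) : IsAntipodal S := by
  intro x hx y hy hxy
  obtain ⟨f, -, hgap, hslab⟩ := h x hx y hy hxy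
  exact ⟨f, show f y < f x by linarith, hslab⟩

theorem StrictAntipProp.antipProp {S : Set X} (h : StrictAntipProp S) : AntipProp S := by
  intro x hx y hy hxy
  obtain ⟨f, hf, hgap, hslab⟩ := h x hx y hy hxy
  exact ⟨f, hf, hgap.le, hslab⟩

theorem IsBSA.strictAntipProp {S : Set X} {d : ℝ} (h : IsBSA S d) (hd : 1 < d) :
    StrictAntipProp S := by
  intro x hx y hy hxy
  obtain ⟨f, hf, hgap, hslab⟩ := h.2 x hx y hy hxy
  exact ⟨f, hf, hd.trans_le hgap, hslab⟩

variable [FiniteDimensional ℝ X]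

theorem Halpha_eq_two_pow_finrank {S : Finset X} (hcard : S.card = 2 ^ finrank ℝ X)
    (hsphere : (S : Set X) ⊆ sphere 0 1) (hS : AntipProp (S : Set X)) :
    Halpha X = 2 ^ finrank ℝ X :=
  IsGreatest.csSup_eq ⟨⟨S, hcard, hsphere, hS⟩, by
    rintro _ ⟨T, rfl, -, hT⟩
    exact hT.isAntipodal.card_le_two_pow_finrank⟩

theorem strictHalpha_eq_two_pow_finrank {S : Finset X} (hcard : S.card = 2 ^ finrank ℝ X)
    (hsphere : (S : Set X) ⊆ sphere 0 1) (hS : StrictAntipProp (S : Set X)) :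
    strictHalpha X = 2 ^ finrank ℝ X :=
  IsGreatest.csSup_eq ⟨⟨S, hcard, hsphere, hS⟩, by
    rintro _ ⟨T, rfl, -, hT⟩
    exact hT.antipProp.isAntipodal.card_le_two_pow_finrank⟩

end Hadwiger

theorem isBSA_of_forall_abs_eq {X ι : Type*} [NormedAddCommGroup X] [NormedSpace ℝ X]
    {S : Set X} {d : ℝ} (g : ι → X →L[ℝ] ℝ) (c : ι → ℝ) (hS : S ⊆ closedBall 0 1)
    (hg : ∀ i, ‖g i‖ ≤ 1) (hd : ∀ i, d ≤ 2 * c i) (habs : ∀ z ∈ S, ∀ i, |g i z| = c i)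
    (hsep : ∀ v, (∀ i, g i v = 0) → v = 0) : IsBSA S d := by
  refine ⟨hS, fun x hx y hy hxy => ?_⟩
  -- `x` and `y` differ at some `g i`, where one of them takes the value `c i` and the other `-c i`
  obtain ⟨i, hi⟩ : ∃ i, g i x ≠ g i y := by
    by_contra! h
    exact hxy (sub_eq_zero.1 (hsep _ fun i => by rw [map_sub, h i, sub_self]))
  have hxy' : g i x = -g i y :=
    ((abs_eq_abs.1 ((habs x hx i).trans (habs y hy i).symm)).resolve_left hi)
  obtain ⟨f, hf, hfx, hfy, hfS⟩ : ∃ f : X →L[ℝ] ℝ, ‖f‖ ≤ 1 ∧ f x = c i ∧ f y = -c i ∧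
      ∀ z ∈ S, |f z| = c i := by
    rcases (abs_eq (habs x hx i ▸ abs_nonneg _)).1 (habs x hx i) with h | h
    · exact ⟨g i, hg i, h, by linarith, fun z hz => habs z hz i⟩
    · refine ⟨-g i, by rw [norm_neg]; exact hg i, by simp [h], by simp; linarith,
        fun z hz => by simpa using habs z hz i⟩
  refine ⟨f, hf, by rw [hfx, hfy]; linarith [hd i], fun z hz => ?_⟩
  rw [hfx, hfy]
  exact abs_le.1 (hfS z hz).le

theorem abs_mul_add_mul_add_mul_le_sqrt_add_abs {a b c : ℝ} (hab : a ^ 2 + b ^ 2 ≤ 1)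
    (hc : |c| ≤ 1) (x y z : ℝ) : |a * x + b * y + c * z| ≤ √(x ^ 2 + y ^ 2) + |z| := by
  have hxy : |a * x + b * y| ≤ √(x ^ 2 + y ^ 2) := by
    rw [← Real.sqrt_sq_eq_abs]
    -- Cauchy–Schwarz in the plane, via Lagrange's identity
    apply Real.sqrt_le_sqrt
    nlinarith [sq_nonneg (a * y - b * x),
      mul_nonneg (sub_nonneg.2 hab) (add_nonneg (sq_nonneg x) (sq_nonneg y))]
  have hz : |c * z| ≤ |z| := by
    rw [abs_mul]
    exact mul_le_of_le_one_left (abs_nonneg z) hc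
  exact (abs_add_le _ _).trans (add_le_add hxy hz)

section Petty

variable {X : Type*} [NormedAddCommGroup X] [NormedSpace ℝ X]

def IsPettyCoordinates (φ : X ≃ₗ[ℝ] (Fin 3 → ℝ)) : Prop :=
  ∀ v : X, ‖v‖ = √(φ v 0 ^ 2 + φ v 1 ^ 2) + |φ v 2|

variable {φ : X ≃ₗ[ℝ] (Fin 3 → ℝ)}

theorem IsPettyCoordinates.exists_dual (hφ : IsPettyCoordinates φ) {a b c : ℝ}
    (hab : a ^ 2 + b ^ 2 ≤ 1) (hc : |c| ≤ 1) :
    ∃ f : X →L[ℝ] ℝ, ‖f‖ ≤ 1 ∧ ∀ v, f v = a * φ v 0 + b * φ v 1 + c * φ v 2 := by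
  let l : X →ₗ[ℝ] ℝ :=
    (a • LinearMap.proj 0 + b • LinearMap.proj 1 + c • LinearMap.proj 2) ∘ₗ φ.toLinearMap
  have hl : ∀ v, l v = a * φ v 0 + b * φ v 1 + c * φ v 2 := fun v => by simp [l]
  have hbound : ∀ v, ‖l v‖ ≤ 1 * ‖v‖ := fun v => by
    rw [one_mul, hφ v, Real.norm_eq_abs, hl]
    exact abs_mul_add_mul_add_mul_le_sqrt_add_abs hab hc _ _ _
  exact ⟨l.mkContinuous 1 hbound, LinearMap.mkContinuous_norm_le _ zero_le_one _, hl⟩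

theorem IsPettyCoordinates.norm_eq (hφ : IsPettyCoordinates φ) {v : X} {x y z r : ℝ}
    (hv : φ v = ![x, y, z]) (hr : 0 ≤ r) (hxy : x ^ 2 + y ^ 2 = r ^ 2) : ‖v‖ = r + |z| := by
  simp [hφ v, hv, hxy, Real.sqrt_sq hr]

variable (φ) {A B C D : X}
  (hA : φ A = ![-0.18, 0, 0.82]) (hB : φ B = ![0.82, 0, -0.18])
  (hC : φ C = ![0.32, 0.6, 0.32]) (hD : φ D = ![0.32, -0.6, 0.32])
include hA hB hC hD

theorem petty_points_card [DecidableEq X] :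
    ({A, -A, B, -B, C, -C, D, -D} : Finset X).card = 8 := by
  classical
  rw [← Finset.card_image_of_injective _ φ.injective]
  simp only [Finset.image_insert, Finset.image_singleton, map_neg, hA, hB, hC, hD,
    Matrix.neg_cons, Matrix.neg_empty]
  repeat rw [Finset.card_insert_of_notMem]
  all_goals norm_num [Matrix.vecCons_inj]

variable {φ} (hφ : IsPettyCoordinates φ)
include hφ

theorem petty_points_subset_sphere :
    ({A, -A, B, -B, C, -C, D, -D} : Set X) ⊆ sphere 0 1 := by
  have h : ∀ P ∈ ({A, B, C, D} : Set X), ‖P‖ = 1 := by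
    rintro P (rfl | rfl | rfl | rfl)
    · rw [hφ.norm_eq hA (r := 0.18) (by norm_num) (by norm_num)]; norm_num
    · rw [hφ.norm_eq hB (r := 0.82) (by norm_num) (by norm_num)]; norm_num
    · rw [hφ.norm_eq hC (r := 0.68) (by norm_num) (by norm_num)]; norm_num
    · rw [hφ.norm_eq hD (r := 0.68) (by norm_num) (by norm_num)]; norm_num
  intro z hz
  rw [mem_sphere_zero_iff_norm]
  rcases hz with rfl | rfl | rfl | rfl | rfl | rfl | rfl | rfl <;>
    (try rw [norm_neg]) <;> exact h _ (by simp)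

theorem petty_points_isBSA : IsBSA ({A, -A, B, -B, C, -C, D, -D} : Set X) 1.02 := by
  obtain ⟨g₁, hg₁, hv₁⟩ := hφ.exists_dual (a := 1) (b := 0) (c := 1) (by norm_num) (by norm_num)
  obtain ⟨g₂, hg₂, hv₂⟩ := hφ.exists_dual (a := -0.51) (b := 0.85) (c := 0.51)
    (by norm_num) (by norm_num [abs_of_pos])
  obtain ⟨g₃, hg₃, hv₃⟩ := hφ.exists_dual (a := -0.51) (b := -0.85) (c := 0.51)
    (by norm_num) (by norm_num [abs_of_pos])
  have habs : ∀ P ∈ ({A, B, C, D} : Set X), ∀ i,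
      |![g₁, g₂, g₃] i P| = ![(0.64 : ℝ), 0.51, 0.51] i := by
    rintro P (rfl | rfl | rfl | rfl) i <;> fin_cases i <;>
      simp [hv₁, hv₂, hv₃, hA, hB, hC, hD] <;> norm_num [abs_of_pos]
  refine isBSA_of_forall_abs_eq ![g₁, g₂, g₃] ![0.64, 0.51, 0.51]
    ((petty_points_subset_sphere hA hB hC hD hφ).trans sphere_subset_closedBall)
    (fun i => by fin_cases i <;> assumption) (fun i => by fin_cases i <;> norm_num) ?_ ?_
  · intro z hz i
    rcases hz with rfl | rfl | rfl | rfl | rfl | rfl | rfl | rfl <;>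
      (try rw [map_neg, abs_neg]) <;> exact habs _ (by simp) i
  · intro v hv
    have h₁ := hv 0
    have h₂ := hv 1
    have h₃ := hv 2
    simp only [Matrix.cons_val_zero, Matrix.cons_val_one, Matrix.cons_val_two, Matrix.tail_cons,
      Matrix.head_cons, hv₁, hv₂, hv₃] at h₁ h₂ h₃
    apply φ.injective
    ext i
    fin_cases i <;> simp <;> linarith

end Petty

/-- Let `X` be the Petty space: `ℝ³` with the norm
`‖(x,y,z)‖ = √(x² + y²) + |z|` (formalized as a normed space `X` with a linear
equivalence `φ : X ≃ₗ[ℝ] (Fin 3 → ℝ)` carrying the norm to that formula). Then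
`H_α(X) = H'_α(X) = 2³ = 8`: the `8` points `±A, ±B, ±C, ±D` with
`A = (−0.18, 0, 0.82)`, `B = (0.82, 0, −0.18)`, `C = (0.32, 0.6, 0.32)`,
`D = (0.32, −0.6, 0.32)` lie on the unit sphere of `X` and form a bounded and separated
antipodal set with some constant `d > 1`, and `8` is the largest possible cardinality of
such a set. -/
theorem Halpha_petty_space (X : Type*) [NormedAddCommGroup X] [NormedSpace ℝ X]
    (φ : X ≃ₗ[ℝ] (Fin 3 → ℝ))
    (hnorm : ∀ v : X, ‖v‖ = Real.sqrt ((φ v 0) ^ 2 + (φ v 1) ^ 2) + |φ v 2|)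
    (A B C D : X)
    (hA : φ A = ![-0.18, 0, 0.82]) (hB : φ B = ![0.82, 0, -0.18])
    (hC : φ C = ![0.32, 0.6, 0.32]) (hD : φ D = ![0.32, -0.6, 0.32])
    (S : Set X) (hS : S = {A, -A, B, -B, C, -C, D, -D}) :
    S ⊆ sphere (0 : X) 1 ∧ (∃ d : ℝ, 1 < d ∧ IsBSA S d) ∧
    Halpha X = 8 ∧ strictHalpha X = 8 := by
  classical
  have : FiniteDimensional ℝ X := φ.symm.finiteDimensional
  have hdim : 8 = 2 ^ finrank ℝ X := by rw [φ.finrank_eq, Module.finrank_fin_fun]; rfl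
  set T : Finset X := {A, -A, B, -B, C, -C, D, -D}
  have hTS : (T : Set X) = S := by simp [T, hS]
  have hcard : T.card = 2 ^ finrank ℝ X := hdim ▸ petty_points_card φ hA hB hC hD
  have hsphere : S ⊆ sphere 0 1 := hS ▸ petty_points_subset_sphere hA hB hC hD hnorm
  have hBSA : IsBSA S 1.02 := hS ▸ petty_points_isBSA hA hB hC hD hnorm
  have hstrict := hBSA.strictAntipProp (by norm_num)
  rw [← hTS] at hsphere hstrict
  refine ⟨hTS ▸ hsphere, ⟨1.02, by norm_num, hBSA⟩, ?_, ?_⟩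
  · rw [hdim]
    exact Halpha_eq_two_pow_finrank hcard hsphere hstrict.antipProp
  · rw [hdim]
    exact strictHalpha_eq_two_pow_finrank hcard hsphere hstrict
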